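/- arXiv:1503.02105 — 2 statements merged into one kernel-verified Lean document; each statement's English description precedes it below -/
import Mathlib

section
/- For k ≥ 2, the Cartesian product of k copies of K_3 is K_{1,k+1}-induced-saturated: it contains no induced K_{1,k+1}, but adding any non-edge or deleting any edge creates an induced K_{1,k+1}. -/
open SimpleGraph

/-- `G` contains an induced copy of `H`. -/
def HasInducedCopy {W V : Type*} (H : SimpleGraph W) (G : SimpleGraph V) : Prop :=
  Nonempty (H ↪g G)

/-- `G` is `H`-induced-saturated: `G` has no induced copy of `H`, but deleting any edge
or adding any non-edge creates an induced copy of `H`. -/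
def IsIndSat {V W : Type*} (G : SimpleGraph V) (H : SimpleGraph W) : Prop :=
  ¬ HasInducedCopy H G ∧
  (∀ u v : V, G.Adj u v → HasInducedCopy H (G.deleteEdges {s(u, v)})) ∧
  (∀ u v : V, u ≠ v → ¬ G.Adj u v →
    HasInducedCopy H (G ⊔ SimpleGraph.fromEdgeSet {s(u, v)}))

/-- The star `K_{1,m}` with center `0` and `m` leaves. -/
def starGraph (m : ℕ) : SimpleGraph (Fin (m + 1)) :=
  SimpleGraph.fromRel (fun i _ => i = 0)

/-- The Cartesian product of `k` copies of `K₃`: vertices are functions `Fin k → Fin 3`,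
adjacent iff they differ in exactly one coordinate. -/
def rook3 (k : ℕ) : SimpleGraph (Fin k → Fin 3) :=
  SimpleGraph.fromRel (fun x y => (Finset.univ.filter fun i => x i ≠ y i).card = 1)

/-!
In the `k`-fold Cartesian power of `K₃` the neighbours of `x` are the vertices obtained by
changing one coordinate of `x`, and two neighbours that change the same coordinate are adjacent.
Hence an induced star has at most `k` leaves, one per coordinate.

If `u ~ v` differ in coordinate `i`, let `w` agree with them off `i` and take the third value at
`i`. Once the edge `uv` is deleted, `u`, `v` and one neighbour of `w` in each coordinate other
than `i` are the leaves of an induced `K_{1,k+1}` centred at `w`. If `u ≁ v` are distinct, they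
differ in at least two coordinates. Once the edge `uv` is added, `v` and one neighbour of `u` in
each coordinate (avoiding `v`'s value there) are the leaves of an induced `K_{1,k+1}` centred
at `u`.
-/

open Function

theorem exists_fin_three_ne_and_ne (a b : Fin 3) : ∃ c, c ≠ a ∧ c ≠ b := by
  revert a b; decide

theorem Function.injective_update_of_ne {ι β : Type*} [DecidableEq ι] {x a : ι → β}
    (ha : ∀ i, a i ≠ x i) : Injective fun i ↦ update x i (a i) := by
  intro i j hij
  by_contra hne
  exact ha i (by simpa [hne] using congrFun hij i)

section star

variable {V : Type*} {G : SimpleGraph V} {m : ℕ}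

theorem starGraph_adj {a b : Fin (m + 1)} :
    (_root_.starGraph m).Adj a b ↔ a ≠ b ∧ (a = 0 ∨ b = 0) := by
  rw [_root_.starGraph, fromRel_adj]

theorem hasInducedCopy_starGraph_iff :
    HasInducedCopy (_root_.starGraph m) G ↔
      ∃ (c : V) (L : Fin m → V), Injective L ∧ (∀ i, G.Adj c (L i)) ∧
        ∀ i j, ¬ G.Adj (L i) (L j) := by
  constructor
  · rintro ⟨f⟩
    refine ⟨f 0, fun i ↦ f i.succ, f.injective.comp (Fin.succ_injective _), fun i ↦ ?_,
      fun i j ↦ ?_⟩ <;> simp [f.map_adj_iff, _root_.starGraph_adj, (Fin.succ_ne_zero _).symm]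
  · rintro ⟨c, L, hL, hc, hLL⟩
    have hcL : c ∉ Set.range L := fun ⟨i, hi⟩ ↦ G.irrefl (hi ▸ hc i)
    refine ⟨⟨⟨Fin.cons c L, Fin.cons_injective_of_injective hcL hL⟩, fun {a b} ↦ ?_⟩⟩
    cases a using Fin.cases <;> cases b using Fin.cases <;>
      simp [_root_.starGraph_adj, hc, hLL, (hc _).symm, (Fin.succ_ne_zero _).symm]

theorem hasInducedCopy_starGraph_succ_of {c e : V} {L : Fin m → V} (hL : Injective L)
    (he : e ∉ Set.range L) (hce : G.Adj c e)
    (hc : ∀ i, G.Adj c (L i)) (heL : ∀ i, ¬ G.Adj e (L i)) (hLL : ∀ i j, ¬ G.Adj (L i) (L j)) :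
    HasInducedCopy (_root_.starGraph (m + 1)) G := by
  have hLe : ∀ i, ¬ G.Adj (L i) e := fun i h ↦ heL i h.symm
  refine hasInducedCopy_starGraph_iff.mpr ⟨c, Fin.cons e L, Fin.cons_injective_of_injective he hL,
    ?_, ?_⟩ <;> simp [Fin.forall_fin_succ, hce, hc, heL, hLe, hLL]

end star

theorem hammingDist_eq_one_iff {ι β : Type*} [Fintype ι] [DecidableEq ι] [DecidableEq β]
    {x y : ι → β} : hammingDist x y = 1 ↔ ∃ i, y i ≠ x i ∧ y = update x i (y i) := by
  simp only [hammingDist, Finset.card_eq_one, Finset.ext_iff, Finset.mem_filter, Finset.mem_univ,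
    true_and, Finset.mem_singleton, eq_update_iff]
  refine exists_congr fun i ↦ ⟨fun h ↦ ⟨Ne.symm ((h i).mpr rfl), fun j hj ↦ ?_⟩, fun h j ↦ ?_⟩
  · exact (not_not.mp (mt (h j).mp hj)).symm
  · exact ⟨fun hj ↦ by_contra fun hji ↦ hj (h.2 j hji).symm, fun hj ↦ hj ▸ h.1.symm⟩

theorem rook3_adj_iff_hammingDist {k : ℕ} {x y : Fin k → Fin 3} :
    (rook3 k).Adj x y ↔ hammingDist x y = 1 := by
  change x ≠ y ∧ (hammingDist x y = 1 ∨ hammingDist y x = 1) ↔ _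
  rw [hammingDist_comm y x, or_self, and_iff_right_iff_imp]
  rintro h rfl
  simp at h

theorem rook3_adj_iff {k : ℕ} {x y : Fin k → Fin 3} :
    (rook3 k).Adj x y ↔ ∃ i, y i ≠ x i ∧ y = update x i (y i) :=
  rook3_adj_iff_hammingDist.trans hammingDist_eq_one_iff

section rook3

variable {k : ℕ} {x y : Fin k → Fin 3} {i j : Fin k} {a b : Fin 3}

theorem rook3_adj_update : (rook3 k).Adj x (update x i a) ↔ a ≠ x i := by
  refine ⟨fun h ha ↦ ?_, fun ha ↦ rook3_adj_iff.mpr ⟨i, by simpa using ha, by simp⟩⟩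
  rw [ha, update_eq_self] at h
  exact (rook3 k).irrefl h

theorem rook3_adj_update_update : (rook3 k).Adj (update x i a) (update x i b) ↔ b ≠ a := by
  simpa using rook3_adj_update (x := update x i a) (i := i) (a := b)

theorem rook3_not_adj_of_ne_of_ne (hij : i ≠ j) (hi : x i ≠ y i) (hj : x j ≠ y j) :
    ¬ (rook3 k).Adj x y := fun h ↦ by
  obtain ⟨l, -, hy⟩ := rook3_adj_iff.mp h
  rcases eq_or_ne i l with rfl | hil
  · exact hj (by rw [hy, update_of_ne (Ne.symm hij)])
  · exact hi (by rw [hy, update_of_ne hil])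

theorem rook3_not_adj_update_update (hij : i ≠ j) (ha : a ≠ x i) (hb : b ≠ x j) :
    ¬ (rook3 k).Adj (update x i a) (update x j b) :=
  rook3_not_adj_of_ne_of_ne hij (by simpa [hij] using ha) (by simpa [hij.symm] using hb.symm)

theorem rook3_exists_ne_of_not_adj (hxy : x ≠ y) (h : ¬ (rook3 k).Adj x y) (i : Fin k) :
    ∃ j ≠ i, x j ≠ y j := by
  by_contra! hagree
  have hy : y = update x i (y i) := eq_update_iff.mpr ⟨rfl, fun j hj ↦ (hagree j hj).symm⟩
  refine h (rook3_adj_iff.mpr ⟨i, fun hi ↦ hxy ?_, hy⟩)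
  exact funext fun j ↦ if hj : j = i then hj ▸ hi.symm else hagree j hj

end rook3

theorem rook3_not_hasInducedCopy_starGraph (k : ℕ) :
    ¬ HasInducedCopy (_root_.starGraph (k + 1)) (rook3 k) := by
  rw [hasInducedCopy_starGraph_iff]
  rintro ⟨c, L, hL, hc, hLL⟩
  choose d _ hLd using fun j ↦ rook3_adj_iff.mp (hc j)
  -- two of the `k + 1` leaves are neighbours of `c` in the same coordinate, hence adjacent
  obtain ⟨j, j', hjj', hdd⟩ := Fintype.exists_ne_map_eq_of_card_lt d (by simp)
  have hne : L j' (d j) ≠ L j (d j) := fun h ↦ hjj' <| hL <| by rw [hLd j, hLd j', ← hdd, h]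
  apply hLL j j'
  rw [hLd j, hLd j', ← hdd]
  exact rook3_adj_update_update.mpr hne

theorem rook3_deleteEdges_hasInducedCopy_starGraph {k : ℕ} {u v : Fin k → Fin 3}
    (huv : (rook3 k).Adj u v) :
    HasInducedCopy (_root_.starGraph (k + 1)) ((rook3 k).deleteEdges {s(u, v)}) := by
  obtain ⟨i, hvu, hvu_upd⟩ := rook3_adj_iff.mp huv
  obtain ⟨t, htu, htv⟩ := exists_fin_three_ne_and_ne (u i) (v i)
  set w := update u i t
  set a := update (w + 1) i (u i)
  have ha : ∀ j, a j ≠ w j := by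
    intro j
    rcases eq_or_ne j i with rfl | hji
    · simpa [a, w] using htu.symm
    · simp [a, hji]
  have hu : update w i (a i) = u := by simp [a, w]
  have hv : update w i (v i) = v := by simpa [w] using hvu_upd.symm
  have hwu : w ≠ u := fun h ↦ htu (by simpa [w] using congrFun h i)
  have hwv : w ≠ v := fun h ↦ htv (by simpa [w] using congrFun h i)
  have hvw : v i ≠ w i := by simpa [w] using htv.symm
  have hvL : ∀ j ≠ i, ¬ (rook3 k).Adj v (update w j (a j)) := fun j hji ↦
    hv ▸ rook3_not_adj_update_update hji.symm hvw (ha j)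
  refine hasInducedCopy_starGraph_succ_of (c := w) (e := v) (injective_update_of_ne ha)
    ?_ ?_ (fun j ↦ ?_) (fun j ↦ ?_) (fun j j' ↦ ?_)
  · rintro ⟨j, hj⟩
    dsimp only at hj
    rcases eq_or_ne j i with rfl | hji
    · exact hvu (by rw [← hj, hu])
    · exact hvw (by rw [← hj, update_of_ne hji.symm])
  · simpa [hwu, hwv, hv] using rook3_adj_update.mpr hvw
  · simp [hwu, hwv, rook3_adj_update.mpr (ha j)]
  · rcases eq_or_ne j i with rfl | hji
    · simp [hu]
    · simp [hvL j hji]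
  · rcases eq_or_ne j j' with rfl | hjj'
    · simp
    · simp [rook3_not_adj_update_update hjj' (ha j) (ha j')]

theorem rook3_sup_edge_hasInducedCopy_starGraph {k : ℕ} {u v : Fin k → Fin 3} (hne : u ≠ v)
    (huv : ¬ (rook3 k).Adj u v) :
    HasInducedCopy (_root_.starGraph (k + 1)) (rook3 k ⊔ fromEdgeSet {s(u, v)}) := by
  choose a hau hav using fun j ↦ exists_fin_three_ne_and_ne (u j) (v j)
  have hL : ∀ j, (rook3 k).Adj u (update u j (a j)) := fun j ↦ rook3_adj_update.mpr (hau j)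
  refine hasInducedCopy_starGraph_succ_of (c := u) (e := v) (injective_update_of_ne hau)
    (fun ⟨j, hj⟩ ↦ huv (hj ▸ hL j)) (by simp [hne]) (fun j ↦ by simp [hL j]) (fun j ↦ ?_)
    (fun j j' ↦ ?_)
  · obtain ⟨l, hlj, hl⟩ := rook3_exists_ne_of_not_adj hne huv j
    have hvL : ¬ (rook3 k).Adj v (update u j (a j)) :=
      rook3_not_adj_of_ne_of_ne hlj (by simpa [hlj] using Ne.symm hl) (by simpa using (hav j).symm)
    simp [hvL, hne.symm, hau j]
  · rcases eq_or_ne j j' with rfl | hjj'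
    · simp
    · simp [rook3_not_adj_update_update hjj' (hau j) (hau j'), hau]

theorem rook3_star_indSat_general (k : ℕ) :
    IsIndSat (rook3 k) (_root_.starGraph (k + 1)) :=
  ⟨rook3_not_hasInducedCopy_starGraph k, fun _ _ ↦ rook3_deleteEdges_hasInducedCopy_starGraph,
    fun _ _ ↦ rook3_sup_edge_hasInducedCopy_starGraph⟩

/-- For `k ≥ 2`, the Cartesian product of `k` copies of `K₃` is
`K_{1,k+1}`-induced-saturated. -/
theorem rook3_star_indSat (k : ℕ) (hk : 2 ≤ k) :
    IsIndSat (rook3 k) (_root_.starGraph (k + 1)) :=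
  rook3_star_indSat_general k
end

section
/- If G is a graph in which the neighborhood of every vertex induces a graph isomorphic to 2K_2 (two disjoint edges), then G is claw-induced-saturated. -/
/-!
Suppose every neighbourhood of `G` induces `2K₂`. An induced claw would put three pairwise
non-adjacent vertices into the neighbourhood of its centre, and `2K₂` has no such triple.
Since every vertex of `2K₂` has exactly one neighbour, every edge `uv` of `G` lies in exactly one
triangle `uva`. Deleting `uv`: the neighbourhood of `a` contains a vertex `x` adjacent to neither
`u` nor `v`, so `a, u, v, x` span a claw in `G - uv`. Adding a non-edge `uv`: `v` cannot be
adjacent to both ends of an edge of the neighbourhood of `u`, since that edge would then lie in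
two triangles; a non-neighbour of `v` on each of the two edges gives a claw centred at `u`
in `G + uv`.
-/

open SimpleGraph

/-- The claw `K_{1,3}`: star with center `0` and leaves `1, 2, 3`. -/
def claw : SimpleGraph (Fin 4) :=
  SimpleGraph.fromRel (fun i _ => i = 0)

/-- `2K₂`: two disjoint edges. -/
def twoK2 : SimpleGraph (Fin 2 × Fin 2) :=
  SimpleGraph.fromRel (fun x y => x.1 = y.1)

lemma twoK2_adj {x y : Fin 2 × Fin 2} : twoK2.Adj x y ↔ x ≠ y ∧ x.1 = y.1 := by
  simp only [twoK2, fromRel_adj, eq_comm (a := y.1), or_self]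

instance : DecidableRel twoK2.Adj := fun _ _ => decidable_of_iff _ twoK2_adj.symm

lemma twoK2_exists_adj : ∀ x, ∃ y, twoK2.Adj x y := by decide

lemma twoK2_eq_of_adj_of_adj : ∀ x y z, twoK2.Adj x y → twoK2.Adj x z → y = z := by decide

lemma twoK2_exists_not_adj_not_adj :
    ∀ x y, twoK2.Adj x y → ∃ z, z ≠ x ∧ z ≠ y ∧ ¬twoK2.Adj z x ∧ ¬twoK2.Adj z y := by
  decide

lemma twoK2_adj_or_adj_or_adj :
    ∀ x y z, x ≠ y → x ≠ z → y ≠ z → twoK2.Adj x y ∨ twoK2.Adj x z ∨ twoK2.Adj y z := by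
  decide

lemma claw_adj {i j : Fin 4} : claw.Adj i j ↔ i ≠ j ∧ (i = 0 ∨ j = 0) := by
  simp [claw, fromRel_adj]

instance : DecidableRel claw.Adj := fun _ _ => decidable_of_iff _ claw_adj.symm

lemma hasInducedCopy_claw_iff {V : Type*} {G : SimpleGraph V} :
    HasInducedCopy claw G ↔ ∃ c a b d, G.Adj c a ∧ G.Adj c b ∧ G.Adj c d ∧
      a ≠ b ∧ a ≠ d ∧ b ≠ d ∧ ¬G.Adj a b ∧ ¬G.Adj a d ∧ ¬G.Adj b d := by
  constructor
  · rintro ⟨f⟩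
    refine ⟨f 0, f 1, f 2, f 3, ?_, ?_, ?_, ?_, ?_, ?_, ?_, ?_, ?_⟩ <;>
      simp only [ne_eq, f.map_adj_iff, f.injective.eq_iff] <;> decide
  · rintro ⟨c, a, b, d, hca, hcb, hcd, hab, had, hbd, nab, nad, nbd⟩
    refine ⟨⟨⟨![c, a, b, d], ?_⟩, ?_⟩⟩
    · intro i j hij
      fin_cases i <;> fin_cases j <;> simp_all [hca.ne, hcb.ne, hcd.ne, hca.ne', hcb.ne', hcd.ne']
    · intro i j
      change G.Adj (![c, a, b, d] i) (![c, a, b, d] j) ↔ claw.Adj i j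
      fin_cases i <;> fin_cases j <;>
        simp_all [claw_adj, hca.symm, hcb.symm, hcd.symm, G.adj_comm b a, G.adj_comm d a,
          G.adj_comm d b]

section Locally

variable {V W : Type*}

def IsLocally (G : SimpleGraph V) (H : SimpleGraph W) : Prop :=
  ∀ v, Nonempty (G.induce (G.neighborSet v) ≃g H)

variable {G : SimpleGraph V} {H : SimpleGraph W}

namespace IsLocally

lemma exists_embedding (hG : IsLocally G H) (v : V) :
    ∃ f : H ↪g G, Set.range f = G.neighborSet v := by
  obtain ⟨e⟩ := hG v
  refine ⟨(Embedding.induce _).comp e.symm.toEmbedding, ?_⟩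
  ext w
  constructor
  · rintro ⟨x, rfl⟩
    exact (e.symm x).prop
  · intro hw
    exact ⟨e ⟨w, hw⟩, by simp⟩

lemma exists_adj_adj (hG : IsLocally G H) (hH : ∀ x, ∃ y, H.Adj x y) {u v : V}
    (huv : G.Adj u v) : ∃ a, G.Adj u a ∧ G.Adj v a := by
  obtain ⟨f, hf⟩ := hG.exists_embedding u
  obtain ⟨x, rfl⟩ : v ∈ Set.range f := hf ▸ huv
  obtain ⟨y, hxy⟩ := hH x
  exact ⟨f y, (hf ▸ ⟨y, rfl⟩ : f y ∈ G.neighborSet u), f.map_adj_iff.2 hxy⟩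

lemma eq_of_adj_adj (hG : IsLocally G H) (hH : ∀ x y z, H.Adj x y → H.Adj x z → y = z)
    {a b x y : V} (hab : G.Adj a b) (hax : G.Adj a x) (hbx : G.Adj b x) (hay : G.Adj a y)
    (hby : G.Adj b y) : x = y := by
  obtain ⟨f, hf⟩ := hG.exists_embedding a
  obtain ⟨p, rfl⟩ : b ∈ Set.range f := hf ▸ hab
  obtain ⟨q, rfl⟩ : x ∈ Set.range f := hf ▸ hax
  obtain ⟨r, rfl⟩ : y ∈ Set.range f := hf ▸ hay
  rw [hH p q r (f.map_adj_iff.1 hbx) (f.map_adj_iff.1 hby)]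

lemma exists_adj_not_adj_not_adj (hG : IsLocally G H)
    (hH : ∀ x y, H.Adj x y → ∃ z, z ≠ x ∧ z ≠ y ∧ ¬H.Adj z x ∧ ¬H.Adj z y)
    {a u v : V} (hau : G.Adj a u) (hav : G.Adj a v) (huv : G.Adj u v) :
    ∃ x, G.Adj a x ∧ x ≠ u ∧ x ≠ v ∧ ¬G.Adj x u ∧ ¬G.Adj x v := by
  obtain ⟨f, hf⟩ := hG.exists_embedding a
  obtain ⟨p, rfl⟩ : u ∈ Set.range f := hf ▸ hau
  obtain ⟨q, rfl⟩ : v ∈ Set.range f := hf ▸ hav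
  obtain ⟨z, hzp, hzq, nzp, nzq⟩ := hH p q (f.map_adj_iff.1 huv)
  exact ⟨f z, (hf ▸ ⟨z, rfl⟩ : f z ∈ G.neighborSet a), f.injective.ne hzp, f.injective.ne hzq,
    f.map_adj_iff.not.2 nzp, f.map_adj_iff.not.2 nzq⟩

lemma not_hasInducedCopy_claw (hG : IsLocally G H)
    (hH : ∀ x y z, x ≠ y → x ≠ z → y ≠ z → H.Adj x y ∨ H.Adj x z ∨ H.Adj y z) :
    ¬HasInducedCopy claw G := by
  rw [hasInducedCopy_claw_iff]
  rintro ⟨c, a, b, d, hca, hcb, hcd, hab, had, hbd, nab, nad, nbd⟩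
  obtain ⟨f, hf⟩ := hG.exists_embedding c
  obtain ⟨p, rfl⟩ : a ∈ Set.range f := hf ▸ hca
  obtain ⟨q, rfl⟩ : b ∈ Set.range f := hf ▸ hcb
  obtain ⟨r, rfl⟩ : d ∈ Set.range f := hf ▸ hcd
  simp only [f.map_adj_iff, f.injective.ne_iff] at *
  rcases hH p q r hab had hbd with h | h | h <;> contradiction

lemma hasInducedCopy_claw_deleteEdges (hG : IsLocally G twoK2) {u v : V} (huv : G.Adj u v) :
    HasInducedCopy claw (G.deleteEdges {s(u, v)}) := by
  obtain ⟨a, hua, hva⟩ := hG.exists_adj_adj twoK2_exists_adj huv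
  obtain ⟨x, hax, hxu, hxv, nxu, nxv⟩ :=
    hG.exists_adj_not_adj_not_adj twoK2_exists_not_adj_not_adj hua.symm hva.symm huv
  rw [hasInducedCopy_claw_iff]
  refine ⟨a, u, v, x, ?_, ?_, ?_, huv.ne, hxu.symm, hxv.symm, ?_, ?_, ?_⟩ <;>
    simp [hua.symm, hva.symm, hax, hua.ne', hva.ne', G.adj_comm u x, G.adj_comm v x, nxu, nxv]

lemma hasInducedCopy_claw_sup_edge (hG : IsLocally G twoK2) {u v : V} (hne : u ≠ v)
    (huv : ¬G.Adj u v) : HasInducedCopy claw (G ⊔ fromEdgeSet {s(u, v)}) := by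
  obtain ⟨f, hf⟩ := hG.exists_embedding u
  have hfu : ∀ p, G.Adj u (f p) := fun p => (hf ▸ ⟨p, rfl⟩ : f p ∈ G.neighborSet u)
  have hv : ∀ i : Fin 2, ∃ j, ¬G.Adj v (f (i, j)) := by
    intro i
    by_contra! hvi
    have hedge : G.Adj (f (i, 0)) (f (i, 1)) := f.map_adj_iff.2 (twoK2_adj.2 ⟨by simp, rfl⟩)
    exact hne <| hG.eq_of_adj_adj twoK2_eq_of_adj_of_adj hedge (hfu _).symm (hfu _).symm
      (hvi 0).symm (hvi 1).symm
  have hvf : ∀ p, v ≠ f p := fun p h => huv (h ▸ hfu p)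
  obtain ⟨j, hj⟩ := hv 0
  obtain ⟨k, hk⟩ := hv 1
  rw [hasInducedCopy_claw_iff]
  refine ⟨u, v, f (0, j), f (1, k), ?_, ?_, ?_, ?_, ?_, ?_, ?_, ?_, ?_⟩ <;>
    simp [hne, hne.symm, hfu, hvf, hj, hk, (hfu _).ne', f.injective.eq_iff, twoK2_adj]

end IsLocally

end Locally

/-- If the neighborhood of every vertex of `G` induces a graph isomorphic to
`2K₂`, then `G` is claw-induced-saturated. -/
theorem neighborhood_twoK2_claw_indSat {V : Type*} (G : SimpleGraph V)
    (h : ∀ v : V, Nonempty ((G.induce (G.neighborSet v)) ≃g twoK2)) :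
    IsIndSat G claw := by
  have hG : IsLocally G twoK2 := h
  exact ⟨hG.not_hasInducedCopy_claw twoK2_adj_or_adj_or_adj,
    fun _ _ => hG.hasInducedCopy_claw_deleteEdges,
    fun _ _ => hG.hasInducedCopy_claw_sup_edge⟩
end
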